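/- arXiv:2411.19337 — 2 statements merged into one kernel-verified Lean document; each statement's English description precedes it below -/
import Mathlib

section
/- Let p > 0 and let g_p : [0,1/2] → [0,1], g_p(x) = x + 2^p x^{p+1}, with inverse g_p^{-1}. Let h_0 : [0,1] → (0,∞) be continuous and define ρ(x) := h_0(x) · x / (x − g_p^{-1}(x)) for x ∈ (0,1]. Then for every sequence (η_n) in (0,1] with η_n → 0, lim_{n→∞} (1/η_n) ∫_{g_p^{-1}(η_n)}^{η_n} ρ(x) dx = h_0(0). -/
open Filter Set MeasureTheory

/-- The first (left) branch of the LSV map: `g_p(x) = x + 2^p x^(p+1)`. -/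
noncomputable def lsvBranch (p : ℝ) (x : ℝ) : ℝ := x + 2 ^ p * x ^ (p + 1)

open Topology

/-!
Write `ρ = h0 · w` with the weight `w y = y / (y - ginv y)`. Since
`y - ginv y = 2^p (ginv y)^(p+1)` is monotone, on the annulus `[ginv t, t]` the weight lies
between `ginv t / (t - ginv t)` and `t / (ginv t - ginv (ginv t))`, so the average `(1/t) ∫ w`
is squeezed between `ginv t / t` and `(ginv t / ginv (ginv t))^(p+1)`. Both tend to `1` because
`t / ginv t = 1 + (2 ginv t)^p` and `ginv t → 0`. As `w ≥ 0` and `h0` is continuous at `0`, the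
average of `h0` against `w` then tends to `h0 0`.
-/

theorem const_mul_integral_le_integral_mul {f w : ℝ → ℝ} {a b m : ℝ} (hab : a ≤ b)
    (hw : IntervalIntegrable w volume a b)
    (hfw : IntervalIntegrable (fun x => f x * w x) volume a b)
    (hw0 : ∀ x ∈ Icc a b, 0 ≤ w x) (hm : ∀ x ∈ Icc a b, m ≤ f x) :
    m * ∫ x in a..b, w x ≤ ∫ x in a..b, f x * w x := by
  rw [← intervalIntegral.integral_const_mul]
  exact intervalIntegral.integral_mono_on hab (hw.const_mul m) hfw
    fun x hx => mul_le_mul_of_nonneg_right (hm x hx) (hw0 x hx)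

theorem integral_mul_le_const_mul_integral {f w : ℝ → ℝ} {a b M : ℝ} (hab : a ≤ b)
    (hw : IntervalIntegrable w volume a b)
    (hfw : IntervalIntegrable (fun x => f x * w x) volume a b)
    (hw0 : ∀ x ∈ Icc a b, 0 ≤ w x) (hM : ∀ x ∈ Icc a b, f x ≤ M) :
    ∫ x in a..b, f x * w x ≤ M * ∫ x in a..b, w x := by
  rw [← intervalIntegral.integral_const_mul]
  exact intervalIntegral.integral_mono_on hab hfw (hw.const_mul M)
    fun x hx => mul_le_mul_of_nonneg_right (hM x hx) (hw0 x hx)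

theorem ContinuousWithinAt.eventually_forall_Icc_mem {f : ℝ → ℝ} {a b : ℝ} (hab : a < b)
    (hf : ContinuousWithinAt f (Icc a b) a) {U : Set ℝ} (hU : U ∈ 𝓝 (f a)) :
    ∀ᶠ t in 𝓝[>] a, ∀ x ∈ Icc a t, f x ∈ U := by
  have hfU : f ⁻¹' U ∈ 𝓝[≥] a := by
    rw [← nhdsWithin_Icc_eq_nhdsGE hab]
    exact hf hU
  obtain ⟨u, hau, hu⟩ := mem_nhdsGE_iff_exists_Ico_subset.1 hfU
  filter_upwards [Ioo_mem_nhdsGT hau] with t ht x hx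
  exact hu ⟨hx.1, hx.2.trans_lt ht.2⟩

theorem strictMonoOn_lsvBranch {p : ℝ} (hp : -1 < p) : StrictMonoOn (lsvBranch p) (Ici 0) := by
  intro x hx y _ hxy
  have hpow : x ^ (p + 1) ≤ y ^ (p + 1) := Real.rpow_le_rpow hx hxy.le (by linarith)
  have h2p : (0 : ℝ) < 2 ^ p := by positivity
  unfold lsvBranch
  nlinarith

def IsBranchInverse (p : ℝ) (ginv : ℝ → ℝ) : Prop :=
  ∀ x ∈ Icc (0 : ℝ) 1, 0 ≤ ginv x ∧ lsvBranch p (ginv x) = x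

namespace IsBranchInverse

variable {p : ℝ} {ginv : ℝ → ℝ} {x : ℝ}

theorem nonneg (h : IsBranchInverse p ginv) (hx : x ∈ Icc 0 1) : 0 ≤ ginv x := (h x hx).1

theorem sub_eq (h : IsBranchInverse p ginv) (hx : x ∈ Icc 0 1) :
    x - ginv x = 2 ^ p * ginv x ^ (p + 1) := by
  have := (h x hx).2
  unfold lsvBranch at this
  linarith

theorem le_self (h : IsBranchInverse p ginv) (hx : x ∈ Icc 0 1) : ginv x ≤ x := by
  have : 0 ≤ 2 ^ p * ginv x ^ (p + 1) := by have := h.nonneg hx; positivity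
  linarith [h.sub_eq hx]

theorem pos (h : IsBranchInverse p ginv) (hp : -1 < p) (hx : x ∈ Ioc 0 1) : 0 < ginv x := by
  refine (h.nonneg (Ioc_subset_Icc_self hx)).lt_of_ne fun h0 => hx.1.ne ?_
  rw [← (h x (Ioc_subset_Icc_self hx)).2, ← h0, lsvBranch, Real.zero_rpow (by linarith)]
  ring

theorem mem_Ioc (h : IsBranchInverse p ginv) (hp : -1 < p) (hx : x ∈ Ioc 0 1) :
    ginv x ∈ Ioc 0 1 :=
  ⟨h.pos hp hx, (h.le_self (Ioc_subset_Icc_self hx)).trans hx.2⟩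

theorem monotoneOn (h : IsBranchInverse p ginv) (hp : -1 < p) : MonotoneOn ginv (Icc 0 1) := by
  intro s hs t ht hst
  rw [← (strictMonoOn_lsvBranch hp).le_iff_le (h.nonneg hs) (h.nonneg ht), (h s hs).2, (h t ht).2]
  exact hst

theorem monotoneOn_sub (h : IsBranchInverse p ginv) (hp : -1 < p) :
    MonotoneOn (fun x => x - ginv x) (Icc 0 1) := by
  intro s hs t ht hst
  simp only [h.sub_eq hs, h.sub_eq ht]
  gcongr
  · exact h.nonneg hs
  · linarith
  · exact h.monotoneOn hp hs ht hst

theorem sub_pos (h : IsBranchInverse p ginv) (hp : -1 < p) (hx : x ∈ Ioc 0 1) :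
    0 < x - ginv x := by
  rw [h.sub_eq (Ioc_subset_Icc_self hx)]
  have := h.pos hp hx
  positivity

theorem self_div (h : IsBranchInverse p ginv) (hp : -1 < p) (hx : x ∈ Ioc 0 1) :
    x / ginv x = 1 + (2 * ginv x) ^ p := by
  have hg := h.pos hp hx
  have hsub := h.sub_eq (Ioc_subset_Icc_self hx)
  rw [Real.rpow_add_one hg.ne'] at hsub
  rw [div_eq_iff hg.ne', Real.mul_rpow zero_le_two hg.le]
  linear_combination hsub

theorem sub_div_sub (h : IsBranchInverse p ginv) (hp : -1 < p) (hx : x ∈ Ioc 0 1) :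
    (x - ginv x) / (ginv x - ginv (ginv x)) = (ginv x / ginv (ginv x)) ^ (p + 1) := by
  have hgx := h.mem_Ioc hp hx
  rw [h.sub_eq (Ioc_subset_Icc_self hx), h.sub_eq (Ioc_subset_Icc_self hgx),
    mul_div_mul_left _ _ (by positivity), Real.div_rpow (h.nonneg (Ioc_subset_Icc_self hx))
      (h.nonneg (Ioc_subset_Icc_self hgx))]

theorem tendsto_nhdsGT_zero (h : IsBranchInverse p ginv) (hp : -1 < p) :
    Tendsto ginv (𝓝[>] 0) (𝓝[>] 0) := by
  refine tendsto_nhdsWithin_iff.2 ⟨?_, ?_⟩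
  · refine tendsto_of_tendsto_of_tendsto_of_le_of_le' tendsto_const_nhds
      (tendsto_nhdsWithin_of_tendsto_nhds tendsto_id) ?_ ?_ <;>
      filter_upwards [Ioc_mem_nhdsGT one_pos] with x hx
    exacts [h.nonneg (Ioc_subset_Icc_self hx), h.le_self (Ioc_subset_Icc_self hx)]
  · filter_upwards [Ioc_mem_nhdsGT one_pos] with x hx using (h.mem_Ioc hp hx).1

theorem tendsto_self_div (h : IsBranchInverse p ginv) (hp : 0 < p) :
    Tendsto (fun x => x / ginv x) (𝓝[>] 0) (𝓝 1) := by
  have hcont : Tendsto (fun y : ℝ => 1 + (2 * y) ^ p) (𝓝 0) (𝓝 1) := by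
    have hc : Continuous fun y : ℝ => 1 + (2 * y) ^ p :=
      continuous_const.add ((continuous_const.mul continuous_id).rpow_const fun _ => Or.inr hp.le)
    simpa [Real.zero_rpow hp.ne'] using hc.tendsto 0
  refine (hcont.comp ((h.tendsto_nhdsGT_zero (by linarith)).mono_right nhdsWithin_le_nhds)).congr'
    ?_
  filter_upwards [Ioc_mem_nhdsGT one_pos] with x hx
  exact (h.self_div (by linarith) hx).symm

theorem weight_nonneg (h : IsBranchInverse p ginv) (hx : x ∈ Icc 0 1) : 0 ≤ x / (x - ginv x) :=
  div_nonneg hx.1 (sub_nonneg.2 (h.le_self hx))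

theorem intervalIntegrable_weight (h : IsBranchInverse p ginv) (hp : -1 < p)
    (hx : x ∈ Ioc 0 1) : IntervalIntegrable (fun y => y / (y - ginv y)) volume (ginv x) x := by
  have hsub : uIcc (ginv x) x ⊆ Ioc 0 1 := by
    rw [uIcc_of_le (h.le_self (Ioc_subset_Icc_self hx))]
    exact Icc_subset_Ioc (h.pos hp hx) hx.2
  have hanti : AntitoneOn (fun y => (y - ginv y)⁻¹) (uIcc (ginv x) x) := fun s hs t ht hst =>
    inv_anti₀ (h.sub_pos hp (hsub hs))
      (h.monotoneOn_sub hp (Ioc_subset_Icc_self (hsub hs)) (Ioc_subset_Icc_self (hsub ht)) hst)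
  simpa only [div_eq_mul_inv] using hanti.intervalIntegrable.continuousOn_mul (continuousOn_id' _)

theorem average_weight_mem_Icc (h : IsBranchInverse p ginv) (hp : -1 < p) (hx : x ∈ Ioc 0 1) :
    ginv x / x ≤ 1 / x * ∫ y in ginv x..x, y / (y - ginv y) ∧
      1 / x * ∫ y in ginv x..x, y / (y - ginv y) ≤ (x - ginv x) / (ginv x - ginv (ginv x)) := by
  set a := ginv x
  have hx0 : 0 < x := hx.1
  have hx' := Ioc_subset_Icc_self hx
  have ha := h.mem_Ioc hp hx
  have hax : a ≤ x := h.le_self hx'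
  have hmem : ∀ y ∈ Icc a x, y ∈ Icc (0 : ℝ) 1 := fun y hy =>
    ⟨ha.1.le.trans hy.1, hy.2.trans hx.2⟩
  have hL : 0 < x - a := h.sub_pos hp hx
  have hd : 0 < a - ginv a := h.sub_pos hp ha
  have hint := h.intervalIntegrable_weight hp hx
  have hlow : ∫ _ in a..x, a / (x - a) ≤ ∫ y in a..x, y / (y - ginv y) :=
    intervalIntegral.integral_mono_on hax intervalIntegrable_const hint fun y hy =>
      div_le_div₀ (hmem y hy).1 hy.1 (h.sub_pos hp ⟨ha.1.trans_le hy.1, (hmem y hy).2⟩)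
        (h.monotoneOn_sub hp (hmem y hy) hx' hy.2)
  have hup : ∫ y in a..x, y / (y - ginv y) ≤ ∫ _ in a..x, x / (a - ginv a) :=
    intervalIntegral.integral_mono_on hax hint intervalIntegrable_const fun y hy =>
      div_le_div₀ hx'.1 hy.2 hd (h.monotoneOn_sub hp (Ioc_subset_Icc_self ha) (hmem y hy) hy.1)
  rw [intervalIntegral.integral_const, smul_eq_mul] at hlow hup
  constructor
  · calc a / x = 1 / x * ((x - a) * (a / (x - a))) := by field_simp
      _ ≤ _ := by gcongr
  · calc 1 / x * ∫ y in a..x, y / (y - ginv y) ≤ 1 / x * ((x - a) * (x / (a - ginv a))) := by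
          gcongr
      _ = (x - a) / (a - ginv a) := by field_simp

theorem tendsto_average_weight (h : IsBranchInverse p ginv) (hp : 0 < p) :
    Tendsto (fun x => 1 / x * ∫ y in ginv x..x, y / (y - ginv y)) (𝓝[>] 0) (𝓝 1) := by
  have hp' : -1 < p := by linarith
  have hlow : Tendsto (fun x => ginv x / x) (𝓝[>] 0) (𝓝 1) := by
    simpa only [inv_div, inv_one] using (h.tendsto_self_div hp).inv₀ one_ne_zero
  have hup : Tendsto (fun x => (x - ginv x) / (ginv x - ginv (ginv x))) (𝓝[>] 0) (𝓝 1) := by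
    have hpow := (Real.continuousAt_rpow_const 1 (p + 1) (Or.inl one_ne_zero)).tendsto.comp
      ((h.tendsto_self_div hp).comp (h.tendsto_nhdsGT_zero hp'))
    rw [Real.one_rpow] at hpow
    refine hpow.congr' ?_
    filter_upwards [Ioc_mem_nhdsGT one_pos] with x hx
    exact (h.sub_div_sub hp' hx).symm
  refine tendsto_of_tendsto_of_tendsto_of_le_of_le' hlow hup ?_ ?_ <;>
    filter_upwards [Ioc_mem_nhdsGT one_pos] with x hx
  exacts [(h.average_weight_mem_Icc hp' hx).1, (h.average_weight_mem_Icc hp' hx).2]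

theorem tendsto_average_density (h : IsBranchInverse p ginv) (hp : 0 < p) {h0 : ℝ → ℝ}
    (h0cont : ContinuousOn h0 (Icc 0 1)) :
    Tendsto (fun x => 1 / x * ∫ y in ginv x..x, h0 y * (y / (y - ginv y))) (𝓝[>] 0)
      (𝓝 (h0 0)) := by
  have hp' : -1 < p := by linarith
  have hW := h.tendsto_average_weight hp
  have hc : ContinuousWithinAt h0 (Icc 0 1) 0 := h0cont 0 ⟨le_rfl, zero_le_one⟩
  have hsetup : ∀ᶠ x in 𝓝[>] (0 : ℝ), x ∈ Ioc 0 1 ∧ IntervalIntegrable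
      (fun y => h0 y * (y / (y - ginv y))) volume (ginv x) x := by
    filter_upwards [Ioc_mem_nhdsGT one_pos] with x hx
    refine ⟨hx, (h.intervalIntegrable_weight hp' hx).continuousOn_mul (h0cont.mono ?_)⟩
    rw [uIcc_of_le (h.le_self (Ioc_subset_Icc_self hx))]
    exact Icc_subset_Icc (h.nonneg (Ioc_subset_Icc_self hx)) hx.2
  have hw0 : ∀ x ∈ Ioc (0 : ℝ) 1, ∀ y ∈ Icc (ginv x) x, 0 ≤ y / (y - ginv y) :=
    fun x hx y hy =>
      h.weight_nonneg ⟨(h.nonneg (Ioc_subset_Icc_self hx)).trans hy.1, hy.2.trans hx.2⟩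
  have hIcc : ∀ x ∈ Ioc (0 : ℝ) 1, Icc (ginv x) x ⊆ Icc 0 x := fun x hx =>
    Icc_subset_Icc_left (h.nonneg (Ioc_subset_Icc_self hx))
  refine tendsto_order.2 ⟨fun b hb => ?_, fun b hb => ?_⟩
  · obtain ⟨m, hbm, hm⟩ := exists_between hb
    filter_upwards [hsetup, hc.eventually_forall_Icc_mem one_pos (Ioi_mem_nhds hm),
      (hW.const_mul m).eventually (lt_mem_nhds (by simpa using hbm))] with x ⟨hx, hint⟩ hmx hbx
    have hx0 : 0 < x := hx.1
    refine hbx.trans_le ?_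
    rw [mul_left_comm]
    gcongr
    exact const_mul_integral_le_integral_mul (h.le_self (Ioc_subset_Icc_self hx))
      (h.intervalIntegrable_weight hp' hx) hint (hw0 x hx) fun y hy => (hmx y (hIcc x hx hy)).le
  · obtain ⟨M, hM, hMb⟩ := exists_between hb
    filter_upwards [hsetup, hc.eventually_forall_Icc_mem one_pos (Iio_mem_nhds hM),
      (hW.const_mul M).eventually (gt_mem_nhds (by simpa using hMb))] with x ⟨hx, hint⟩ hMx hxb
    have hx0 : 0 < x := hx.1
    refine lt_of_le_of_lt ?_ hxb
    rw [mul_left_comm]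
    gcongr
    exact integral_mul_le_const_mul_integral (h.le_self (Ioc_subset_Icc_self hx))
      (h.intervalIntegrable_weight hp' hx) hint (hw0 x hx) fun y hy => (hMx y (hIcc x hx hy)).le

end IsBranchInverse

theorem stmt9_general (p : ℝ) (hp : 0 < p) (ginv : ℝ → ℝ)
    (hginv : ∀ x ∈ Icc (0 : ℝ) 1, ginv x ∈ Icc (0 : ℝ) (1 / 2) ∧ lsvBranch p (ginv x) = x)
    (h0 : ℝ → ℝ) (h0cont : ContinuousOn h0 (Icc 0 1))
    (ρ : ℝ → ℝ) (hρ : ∀ x, ρ x = h0 x * x / (x - ginv x))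
    (η : ℕ → ℝ) (hη_mem : ∀ n, η n ∈ Ioc (0 : ℝ) 1) (hη : Tendsto η atTop (nhds 0)) :
    Tendsto (fun n => (1 / η n) * ∫ x in (ginv (η n))..(η n), ρ x) atTop
      (nhds (h0 0)) := by
  obtain rfl : ρ = fun x => h0 x * (x / (x - ginv x)) :=
    funext fun x => (hρ x).trans (mul_div_assoc ..)
  have hinv : IsBranchInverse p ginv := fun x hx => ⟨(hginv x hx).1.1, (hginv x hx).2⟩
  exact (hinv.tendsto_average_density hp h0cont).comp
    (tendsto_nhdsWithin_iff.2 ⟨hη, .of_forall fun n => (hη_mem n).1⟩)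

theorem stmt9 (p : ℝ) (hp : 0 < p) (ginv : ℝ → ℝ)
    (hginv : ∀ x ∈ Icc (0 : ℝ) 1, ginv x ∈ Icc (0 : ℝ) (1 / 2) ∧ lsvBranch p (ginv x) = x)
    (h0 : ℝ → ℝ) (h0cont : ContinuousOn h0 (Icc 0 1))
    (h0pos : ∀ x ∈ Icc (0 : ℝ) 1, 0 < h0 x)
    (ρ : ℝ → ℝ) (hρ : ∀ x, ρ x = h0 x * x / (x - ginv x))
    (η : ℕ → ℝ) (hη_mem : ∀ n, η n ∈ Ioc (0 : ℝ) 1) (hη : Tendsto η atTop (nhds 0)) :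
    Tendsto (fun n => (1 / η n) * ∫ x in (ginv (η n))..(η n), ρ x) atTop
      (nhds (h0 0)) :=
  stmt9_general p hp ginv hginv h0 h0cont ρ hρ η hη_mem hη
end

section
/- Let p > 1 and α := 1/p ∈ (0,1). Let g_p : [0,1/2] → [0,1], g_p(x) = x + 2^p x^{p+1}, with inverse g_p^{-1}. Let h_0 : [0,1] → (0,∞) be continuous and define ρ(x) := h_0(x) · x / (x − g_p^{-1}(x)) for x ∈ (0,1], I(η) := ∫_η^1 dx / (x − g_p^{-1}(x)) for η ∈ (0,1], and γ(s) := ( 2(1−α) / (h_0(0) Γ(1+α) Γ(2−α) α^α) )^{1/α} · s^{1/α} for s > 0. Then for every sequence (η_n) in (0,1] with η_n → 0, lim_{n→∞} I(η_n) · γ( ∫_{g_p^{-1}(η_n)}^{η_n} ρ(x) dx ) = ( Γ(1+α) Γ(1−α) )^{−1/α}. -/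
/-!
Substituting `x = g_p t` makes `I` explicit: `I η = Φ (1/2) - Φ (g_p⁻¹ η)` with
`Φ t = (p + 1) log t - t^(-p) / (p 2^p)`, so `I η ~ (g_p⁻¹ η)^(-p) / (p 2^p)`.
Since `ρ` is continuous on `(0, 1]`, the mean value theorem for integrals gives
`∫_{g_p⁻¹ η}^η ρ = (η - g_p⁻¹ η) ρ ξ` for some `ξ` in between, and
`η - g_p⁻¹ η = 2^p (g_p⁻¹ η)^(p+1)` shows that this integral is `~ h_0(0) g_p⁻¹ η`.
The powers of `g_p⁻¹ η` in `I` and `γ` cancel, and `Γ(2 - α) = (1 - α) Γ(1 - α)` turns the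
remaining constant into `(Γ(1 + α) Γ(1 - α))^(-p)`.
-/

open Filter Set MeasureTheory

open Real Topology

theorem IsClosedMap.continuousOn_image_of_leftInvOn {α β : Type*} [TopologicalSpace α]
    [TopologicalSpace β] {f : α → β} {s : Set α} (h : IsClosedMap (s.domRestrict f))
    {finv : β → α} (hleft : LeftInvOn finv f s) : ContinuousOn finv (f '' s) := by
  refine continuousOn_iff_isClosed.2 fun t ht => ⟨f '' (t ∩ s), ?_, ?_⟩
  · rw [← image_domRestrict]
    exact h _ (ht.preimage continuous_subtype_val)
  · rw [inter_eq_self_of_subset_left (image_mono inter_subset_right), hleft.image_inter']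

section lsvBranch

variable {p : ℝ}

theorem lsvBranch_sub_self (p t : ℝ) : lsvBranch p t - t = 2 ^ p * t ^ (p + 1) := by
  unfold lsvBranch; ring

theorem lsvBranch_div_self (p : ℝ) {t : ℝ} (ht : 0 < t) :
    lsvBranch p t / t = 1 + 2 ^ p * t ^ p := by
  unfold lsvBranch
  rw [rpow_add_one ht.ne']
  field_simp

theorem lsvBranch_zero (hp : p + 1 ≠ 0) : lsvBranch p 0 = 0 := by
  simp [lsvBranch, zero_rpow hp]

theorem lsvBranch_one_half (p : ℝ) : lsvBranch p (1 / 2) = 1 := by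
  rw [lsvBranch, div_rpow zero_le_one zero_le_two, one_rpow, rpow_add_one two_ne_zero]
  field_simp
  norm_num

theorem lsvBranch_strictMonoOn (hp : -1 < p) : StrictMonoOn (lsvBranch p) (Ici 0) := by
  intro x hx y _ hxy
  have : x ^ (p + 1) ≤ y ^ (p + 1) := rpow_le_rpow hx hxy.le (by linarith)
  unfold lsvBranch
  nlinarith [rpow_pos_of_pos two_pos p]

theorem continuous_lsvBranch (hp : -1 < p) : Continuous (lsvBranch p) := by
  unfold lsvBranch
  exact continuous_id.add (continuous_const.mul (continuous_rpow_const (by linarith)))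

theorem hasDerivAt_lsvBranch (p : ℝ) {t : ℝ} (ht : t ≠ 0) :
    HasDerivAt (lsvBranch p) (1 + 2 ^ p * ((p + 1) * t ^ p)) t := by
  have h := (hasDerivAt_rpow_const (p := p + 1) (Or.inl ht)).const_mul (2 ^ p)
  rw [add_sub_cancel_right] at h
  exact (hasDerivAt_id t).add h

theorem mapsTo_lsvBranch (hp : -1 < p) : MapsTo (lsvBranch p) (Icc 0 (1 / 2)) (Icc 0 1) := by
  intro y hy
  have hmono := (lsvBranch_strictMonoOn hp).monotoneOn
  rw [← lsvBranch_zero (by linarith : p + 1 ≠ 0), ← lsvBranch_one_half p]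
  exact ⟨hmono self_mem_Ici hy.1 hy.1, hmono hy.1 (by norm_num) hy.2⟩

end lsvBranch

section lsvInv

variable {p : ℝ} {ginv : ℝ → ℝ}

theorem lsvInv_sub (hinv : RightInvOn ginv (lsvBranch p) (Icc 0 1)) {x : ℝ} (hx : x ∈ Icc 0 1) :
    x - ginv x = 2 ^ p * ginv x ^ (p + 1) := by
  have h := lsvBranch_sub_self p (ginv x)
  rwa [hinv hx] at h

theorem leftInvOn_lsvInv (hp : -1 < p) (hinv : RightInvOn ginv (lsvBranch p) (Icc 0 1))
    (hmaps : MapsTo ginv (Icc 0 1) (Icc 0 (1 / 2))) :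
    LeftInvOn ginv (lsvBranch p) (Icc 0 (1 / 2)) := fun _ hy =>
  (lsvBranch_strictMonoOn hp).injOn (hmaps (mapsTo_lsvBranch hp hy)).1 hy.1
    (hinv (mapsTo_lsvBranch hp hy))

theorem monotoneOn_lsvInv (hp : -1 < p) (hinv : RightInvOn ginv (lsvBranch p) (Icc 0 1))
    (hmaps : MapsTo ginv (Icc 0 1) (Icc 0 (1 / 2))) : MonotoneOn ginv (Icc 0 1) := by
  intro x hx y hy hxy
  rw [← (lsvBranch_strictMonoOn hp).le_iff_le (hmaps hx).1 (hmaps hy).1, hinv hx, hinv hy]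
  exact hxy

theorem continuousOn_lsvInv (hp : -1 < p) (hinv : RightInvOn ginv (lsvBranch p) (Icc 0 1))
    (hmaps : MapsTo ginv (Icc 0 1) (Icc 0 (1 / 2))) : ContinuousOn ginv (Icc 0 1) := by
  have himage : lsvBranch p '' Icc 0 (1 / 2) = Icc 0 1 :=
    (mapsTo_lsvBranch hp).image_subset.antisymm fun x hx => ⟨ginv x, hmaps hx, hinv hx⟩
  have : CompactSpace (Icc (0 : ℝ) (1 / 2)) := isCompact_iff_compactSpace.1 isCompact_Icc
  rw [← himage]
  exact (continuous_lsvBranch hp).continuousOn.domRestrict.isClosedMap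
    |>.continuousOn_image_of_leftInvOn (leftInvOn_lsvInv hp hinv hmaps)

theorem lsvInv_pos (hp : p + 1 ≠ 0) (hinv : RightInvOn ginv (lsvBranch p) (Icc 0 1))
    (hmaps : MapsTo ginv (Icc 0 1) (Icc 0 (1 / 2))) {x : ℝ} (hx : x ∈ Ioc 0 1) :
    0 < ginv x := by
  refine (hmaps (Ioc_subset_Icc_self hx)).1.lt_of_ne fun h => hx.1.ne ?_
  rw [← hinv (Ioc_subset_Icc_self hx), ← h, lsvBranch_zero hp]

theorem lsvInv_lt_self (hp : p + 1 ≠ 0) (hinv : RightInvOn ginv (lsvBranch p) (Icc 0 1))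
    (hmaps : MapsTo ginv (Icc 0 1) (Icc 0 (1 / 2))) {x : ℝ} (hx : x ∈ Ioc 0 1) :
    ginv x < x := by
  have h := lsvInv_sub hinv (Ioc_subset_Icc_self hx)
  have : 0 < 2 ^ p * ginv x ^ (p + 1) := by have := lsvInv_pos hp hinv hmaps hx; positivity
  linarith

theorem tendsto_lsvInv_nhdsGT_zero (hp : p + 1 ≠ 0)
    (hinv : RightInvOn ginv (lsvBranch p) (Icc 0 1))
    (hmaps : MapsTo ginv (Icc 0 1) (Icc 0 (1 / 2))) : Tendsto ginv (𝓝[>] 0) (𝓝[>] 0) := by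
  have hmem : ∀ᶠ x in 𝓝[>] (0 : ℝ), x ∈ Ioc 0 1 := Ioc_mem_nhdsGT zero_lt_one
  refine tendsto_nhdsWithin_iff.2 ⟨?_, hmem.mono fun x hx => lsvInv_pos hp hinv hmaps hx⟩
  refine tendsto_of_tendsto_of_tendsto_of_le_of_le' tendsto_const_nhds
    (tendsto_nhdsWithin_of_tendsto_nhds tendsto_id) ?_ ?_
  · exact hmem.mono fun x hx => (lsvInv_pos hp hinv hmaps hx).le
  · exact hmem.mono fun x hx => (lsvInv_lt_self hp hinv hmaps hx).le

end lsvInv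

/-- An antiderivative of `t ↦ g_p'(t) / (g_p t - t)`, the integrand of `I` after substituting
`x = g_p t`. -/
noncomputable def lsvPrimitive (p t : ℝ) : ℝ := (p + 1) * log t - 2 ^ (-p) / p * t ^ (-p)

theorem hasDerivAt_lsvPrimitive {p t : ℝ} (hp : p ≠ 0) (ht : 0 < t) :
    HasDerivAt (lsvPrimitive p)
      ((1 + 2 ^ p * ((p + 1) * t ^ p)) / (2 ^ p * t ^ (p + 1))) t := by
  have h : HasDerivAt (lsvPrimitive p)
      ((p + 1) * t⁻¹ - 2 ^ (-p) / p * (-p * t ^ (-p - 1))) t :=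
    ((hasDerivAt_log ht.ne').const_mul (p + 1)).sub
      ((hasDerivAt_rpow_const (Or.inl ht.ne')).const_mul (2 ^ (-p) / p))
  convert h using 1
  rw [rpow_neg zero_le_two, rpow_sub ht, rpow_neg ht.le, rpow_add_one ht.ne', rpow_one]
  have : 0 < t ^ p := rpow_pos_of_pos ht p
  have : (0 : ℝ) < 2 ^ p := rpow_pos_of_pos two_pos p
  field_simp
  ring

theorem tendsto_sub_lsvPrimitive_mul_rpow {p : ℝ} (hp : 0 < p) (c : ℝ) :
    Tendsto (fun t => (c - lsvPrimitive p t) * t ^ p) (𝓝[>] 0) (𝓝 (2 ^ (-p) / p)) := by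
  have hpow : Tendsto (fun t : ℝ => t ^ p) (𝓝[>] 0) (𝓝 0) := by
    simpa [zero_rpow hp.ne'] using
      ((continuousAt_rpow_const 0 p (Or.inr hp.le)).tendsto.mono_left nhdsWithin_le_nhds)
  have hlim := ((hpow.const_mul c).sub
    ((tendsto_log_mul_rpow_nhdsGT_zero hp).const_mul (p + 1))).add
      (tendsto_const_nhds (x := (2 : ℝ) ^ (-p) / p))
  rw [mul_zero, mul_zero, sub_zero, zero_add] at hlim
  refine hlim.congr' (eventually_mem_nhdsWithin.mono fun t (ht : 0 < t) => ?_)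
  have : t ^ (-p) * t ^ p = 1 := by rw [← rpow_add ht, neg_add_cancel, rpow_zero]
  simp only [lsvPrimitive]
  linear_combination (-(2 ^ (-p) / p)) * this

theorem integral_inv_sub_lsvInv {p : ℝ} {ginv : ℝ → ℝ} (hp : 0 < p)
    (hinv : RightInvOn ginv (lsvBranch p) (Icc 0 1))
    (hmaps : MapsTo ginv (Icc 0 1) (Icc 0 (1 / 2))) {η : ℝ} (hη : η ∈ Ioc 0 1) :
    ∫ x in η..1, 1 / (x - ginv x) = lsvPrimitive p (1 / 2) - lsvPrimitive p (ginv η) := by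
  set u := ginv η
  have hu : 0 < u := lsvInv_pos (by linarith) hinv hmaps hη
  have hu2 : u ≤ 1 / 2 := (hmaps (Ioc_subset_Icc_self hη)).2
  have hpos : ∀ t ∈ uIcc u (1 / 2), 0 < t := fun t ht => hu.trans_le (uIcc_of_le hu2 ▸ ht).1
  have hsubst := intervalIntegral.integral_comp_mul_deriv_of_deriv_nonneg
    (g := fun x => 1 / (x - ginv x)) (continuous_lsvBranch (by linarith)).continuousOn
    (fun t ht => hasDerivAt_lsvBranch p (hpos t (Ioo_subset_Icc_self ht)).ne')
    (fun t ht => by have := hpos t (Ioo_subset_Icc_self ht); positivity)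
  rw [hinv (Ioc_subset_Icc_self hη), lsvBranch_one_half] at hsubst
  rw [← hsubst]
  calc ∫ t in u..1 / 2,
        ((fun x => 1 / (x - ginv x)) ∘ lsvBranch p) t * (1 + 2 ^ p * ((p + 1) * t ^ p))
    _ = ∫ t in u..1 / 2, (1 + 2 ^ p * ((p + 1) * t ^ p)) / (2 ^ p * t ^ (p + 1)) := by
        refine intervalIntegral.integral_congr fun t ht => ?_
        have ht' : t ∈ Icc 0 (1 / 2) := ⟨(hpos t ht).le, (uIcc_of_le hu2 ▸ ht).2⟩
        simp only [Function.comp_apply, leftInvOn_lsvInv (by linarith) hinv hmaps ht',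
          lsvBranch_sub_self]
        ring
    _ = lsvPrimitive p (1 / 2) - lsvPrimitive p u := by
        refine intervalIntegral.integral_eq_sub_of_hasDerivAt
          (fun t ht => hasDerivAt_lsvPrimitive hp.ne' (hpos t ht))
          (ContinuousOn.intervalIntegrable ?_)
        have hrpow (q : ℝ) : ContinuousOn (fun t : ℝ => t ^ q) (uIcc u (1 / 2)) :=
          continuousOn_id.rpow_const fun t ht => Or.inl (hpos t ht).ne'
        refine ContinuousOn.div ?_ (continuousOn_const.mul (hrpow _)) fun t ht => ?_
        · exact continuousOn_const.add (continuousOn_const.mul (continuousOn_const.mul (hrpow p)))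
        · have := hpos t ht; positivity

theorem tendsto_integral_inv_sub_lsvInv_mul_rpow {p : ℝ} {ginv : ℝ → ℝ} (hp : 0 < p)
    (hinv : RightInvOn ginv (lsvBranch p) (Icc 0 1))
    (hmaps : MapsTo ginv (Icc 0 1) (Icc 0 (1 / 2))) :
    Tendsto (fun y => (∫ x in y..1, 1 / (x - ginv x)) * ginv y ^ p) (𝓝[>] 0)
      (𝓝 (2 ^ (-p) / p)) := by
  have hmem : ∀ᶠ y in 𝓝[>] (0 : ℝ), y ∈ Ioc 0 1 := Ioc_mem_nhdsGT zero_lt_one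
  refine ((tendsto_sub_lsvPrimitive_mul_rpow hp (lsvPrimitive p (1 / 2))).comp
    (tendsto_lsvInv_nhdsGT_zero (by linarith) hinv hmaps)).congr' (hmem.mono fun y hy => ?_)
  simp only [Function.comp_apply, integral_inv_sub_lsvInv hp hinv hmaps hy]

theorem exists_integral_density_div_lsvInv_eq {p : ℝ} {ginv h : ℝ → ℝ} (hp : -1 < p)
    (hinv : RightInvOn ginv (lsvBranch p) (Icc 0 1))
    (hmaps : MapsTo ginv (Icc 0 1) (Icc 0 (1 / 2))) (hh : ContinuousOn h (Icc 0 1)) {y : ℝ}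
    (hy : y ∈ Ioc 0 1) :
    ∃ ξ ∈ Ioo (ginv y) y, (∫ x in ginv y..y, h x * x / (x - ginv x)) / ginv y
      = h ξ * (lsvBranch p (ginv ξ) / ginv ξ) * (ginv y / ginv ξ) ^ p := by
  have hp1 : p + 1 ≠ 0 := by linarith
  set u := ginv y
  have hu : 0 < u := lsvInv_pos hp1 hinv hmaps hy
  have huy : u < y := lsvInv_lt_self hp1 hinv hmaps hy
  have hsub : Icc u y ⊆ Ioc 0 1 := fun x hx => ⟨hu.trans_le hx.1, hx.2.trans hy.2⟩
  have hcont : ContinuousOn (fun x => h x * x / (x - ginv x)) (uIcc u y) := by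
    rw [uIcc_of_le huy.le]
    have hsub' := hsub.trans Ioc_subset_Icc_self
    refine ((hh.mono hsub').mul continuousOn_id).div
      (continuousOn_id.sub ((continuousOn_lsvInv hp hinv hmaps).mono hsub')) fun x hx => ?_
    exact (sub_pos.2 (lsvInv_lt_self hp1 hinv hmaps (hsub hx))).ne'
  obtain ⟨ξ, hξ, hξeq⟩ := exists_eq_interval_average huy.ne hcont
  rw [uIoo_of_le huy.le] at hξ
  refine ⟨ξ, hξ, ?_⟩
  have hξ1 : ξ ∈ Ioc 0 1 := hsub (Ioo_subset_Icc_self hξ)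
  have hv : 0 < ginv ξ := lsvInv_pos hp1 hinv hmaps hξ1
  rw [interval_average_eq_div, eq_div_iff (sub_pos.2 huy).ne',
    lsvInv_sub hinv (Ioc_subset_Icc_self hy)] at hξeq
  rw [← hξeq, hinv (Ioc_subset_Icc_self hξ1), div_rpow hu.le hv.le,
    lsvInv_sub hinv (Ioc_subset_Icc_self hξ1), rpow_add_one hu.ne', rpow_add_one hv.ne']
  have := rpow_pos_of_pos hu p
  have := rpow_pos_of_pos hv p
  field_simp

theorem tendsto_integral_density_div_lsvInv {p : ℝ} {ginv h : ℝ → ℝ} (hp : 0 < p)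
    (hinv : RightInvOn ginv (lsvBranch p) (Icc 0 1))
    (hmaps : MapsTo ginv (Icc 0 1) (Icc 0 (1 / 2))) (hh : ContinuousOn h (Icc 0 1)) :
    Tendsto (fun y => (∫ x in ginv y..y, h x * x / (x - ginv x)) / ginv y) (𝓝[>] 0)
      (𝓝 (h 0)) := by
  have hp1 : p + 1 ≠ 0 := by linarith
  have hmem : ∀ᶠ y in 𝓝[>] (0 : ℝ), y ∈ Ioc 0 1 := Ioc_mem_nhdsGT zero_lt_one
  choose! ξ hξ hξeq using fun y (hy : y ∈ Ioc 0 1) =>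
    exists_integral_density_div_lsvInv_eq (by linarith) hinv hmaps hh hy
  have hξmem : ∀ y ∈ Ioc 0 1, ξ y ∈ Ioc 0 1 := fun y hy =>
    ⟨(lsvInv_pos hp1 hinv hmaps hy).trans (hξ y hy).1, (hξ y hy).2.le.trans hy.2⟩
  have hξlim : Tendsto ξ (𝓝[>] 0) (𝓝 0) :=
    tendsto_of_tendsto_of_tendsto_of_le_of_le' tendsto_const_nhds
      (tendsto_nhdsWithin_of_tendsto_nhds tendsto_id) (hmem.mono fun y hy => (hξmem y hy).1.le)
      (hmem.mono fun y hy => (hξ y hy).2.le)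
  have hv : Tendsto (fun y => ginv (ξ y)) (𝓝[>] 0) (𝓝[>] 0) :=
    (tendsto_lsvInv_nhdsGT_zero hp1 hinv hmaps).comp
      (tendsto_nhdsWithin_iff.2 ⟨hξlim, hmem.mono fun y hy => (hξmem y hy).1⟩)
  have hvpos : ∀ᶠ y in 𝓝[>] (0 : ℝ), 0 < ginv (ξ y) := hv eventually_mem_nhdsWithin
  have hquot : Tendsto (fun y => lsvBranch p (ginv (ξ y)) / ginv (ξ y)) (𝓝[>] 0) (𝓝 1) := by
    have hlim := ((hv.mono_right nhdsWithin_le_nhds).rpow_const (Or.inr hp.le)).const_mul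
      ((2 : ℝ) ^ p) |>.const_add 1
    rw [zero_rpow hp.ne', mul_zero, add_zero] at hlim
    exact hlim.congr' (hvpos.mono fun y hy => (lsvBranch_div_self p hy).symm)
  -- `ginv (ξ y) ≤ ginv y ≤ ξ y = lsvBranch p (ginv (ξ y))` squeezes the last factor
  have hratio : Tendsto (fun y => ginv y / ginv (ξ y)) (𝓝[>] 0) (𝓝 1) := by
    refine tendsto_of_tendsto_of_tendsto_of_le_of_le' tendsto_const_nhds hquot ?_ ?_
    · filter_upwards [hmem, hvpos] with y hy hvy
      exact (one_le_div hvy).2 (monotoneOn_lsvInv (by linarith) hinv hmaps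
        (Ioc_subset_Icc_self (hξmem y hy)) (Ioc_subset_Icc_self hy) (hξ y hy).2.le)
    · filter_upwards [hmem, hvpos] with y hy hvy
      rw [hinv (Ioc_subset_Icc_self (hξmem y hy))]
      exact div_le_div_of_nonneg_right (hξ y hy).1.le hvy.le
  have hhξ : Tendsto (fun y => h (ξ y)) (𝓝[>] 0) (𝓝 (h 0)) :=
    (hh 0 ⟨le_rfl, zero_le_one⟩).tendsto.comp
      (tendsto_nhdsWithin_iff.2
        ⟨hξlim, hmem.mono fun y hy => Ioc_subset_Icc_self (hξmem y hy)⟩)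
  have hlim := (hhξ.mul hquot).mul (hratio.rpow_const (p := p) (Or.inl one_ne_zero))
  rw [one_rpow, mul_one, mul_one] at hlim
  exact hlim.congr' (hmem.mono fun y hy => (hξeq y hy).symm)

theorem hittingTime_scaling_constant {α p h : ℝ} (hp : 1 < p) (hα : α = 1 / p) (hh : 0 < h) :
    2 ^ (-p) / p * ((2 * (1 - α) / (h * Gamma (1 + α) * Gamma (2 - α) * α ^ α)) ^ p * h ^ p)
      = (Gamma (1 + α) * Gamma (1 - α)) ^ (-p) := by
  have hα0 : 0 < α := by rw [hα]; positivity
  have h1α : 0 < 1 - α := by rw [hα, sub_pos, div_lt_one (by linarith)]; exact hp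
  have hΓ₁ : 0 < Gamma (1 + α) := Gamma_pos_of_pos (by linarith)
  have hΓ₂ : 0 < Gamma (1 - α) := Gamma_pos_of_pos h1α
  have hΓ : Gamma (2 - α) = (1 - α) * Gamma (1 - α) := by
    rw [show 2 - α = 1 - α + 1 by ring, Gamma_add_one h1α.ne']
  have hαα : (α ^ α) ^ p = α := by
    rw [← rpow_mul hα0.le, hα, one_div_mul_cancel (by linarith), rpow_one]
  have hC : 2 * (1 - α) / (h * Gamma (1 + α) * Gamma (2 - α) * α ^ α) * h
      = 2 / ((Gamma (1 + α) * Gamma (1 - α)) * α ^ α) := by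
    rw [hΓ]
    field_simp
  rw [← mul_rpow (by rw [hΓ]; positivity) hh.le, hC,
    div_rpow zero_le_two (by positivity), mul_rpow (by positivity) (by positivity), hαα,
    rpow_neg zero_le_two, rpow_neg (by positivity), hα]
  have : 0 < (Gamma (1 + 1 / p) * Gamma (1 - 1 / p)) ^ p := by rw [← hα]; positivity
  have : (0 : ℝ) < 2 ^ p := by positivity
  field_simp

theorem stmt10 (p : ℝ) (hp : 1 < p) (α : ℝ) (hα : α = 1 / p)
    (ginv : ℝ → ℝ)
    (hginv : ∀ x ∈ Icc (0 : ℝ) 1, ginv x ∈ Icc (0 : ℝ) (1 / 2) ∧ lsvBranch p (ginv x) = x)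
    (h0 : ℝ → ℝ) (h0cont : ContinuousOn h0 (Icc 0 1))
    (h0pos : ∀ x ∈ Icc (0 : ℝ) 1, 0 < h0 x)
    (ρ : ℝ → ℝ) (hρ : ∀ x, ρ x = h0 x * x / (x - ginv x))
    (I : ℝ → ℝ) (hI : ∀ η, I η = ∫ x in η..1, 1 / (x - ginv x))
    (γ : ℝ → ℝ)
    (hγ : ∀ s, 0 < s →
      γ s = (2 * (1 - α) / (h0 0 * Real.Gamma (1 + α) * Real.Gamma (2 - α) * α ^ α)) ^ (1 / α)
        * s ^ (1 / α))
    (η : ℕ → ℝ) (hη_mem : ∀ n, η n ∈ Ioc (0 : ℝ) 1) (hη : Tendsto η atTop (nhds 0)) :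
    Tendsto (fun n => I (η n) * γ (∫ x in (ginv (η n))..(η n), ρ x)) atTop
      (nhds ((Real.Gamma (1 + α) * Real.Gamma (1 - α)) ^ (-(1 / α)))) := by
  have hp0 : 0 < p := by linarith
  have hαp : 1 / α = p := by rw [hα, one_div_one_div]
  have hmaps : MapsTo ginv (Icc 0 1) (Icc 0 (1 / 2)) := fun x hx => (hginv x hx).1
  have hinv : RightInvOn ginv (lsvBranch p) (Icc 0 1) := fun x hx => (hginv x hx).2
  have hmem : ∀ᶠ y in 𝓝[>] (0 : ℝ), y ∈ Ioc 0 1 := Ioc_mem_nhdsGT zero_lt_one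
  have hIlim : Tendsto (fun y => I y * ginv y ^ p) (𝓝[>] 0) (𝓝 (2 ^ (-p) / p)) := by
    simpa only [hI] using tendsto_integral_inv_sub_lsvInv_mul_rpow hp0 hinv hmaps
  have hJlim := tendsto_integral_density_div_lsvInv hp0 hinv hmaps h0cont
  set C := 2 * (1 - α) / (h0 0 * Real.Gamma (1 + α) * Real.Gamma (2 - α) * α ^ α)
  have hlim : Tendsto (fun y => I y * γ (∫ x in ginv y..y, ρ x)) (𝓝[>] 0)
      (𝓝 (2 ^ (-p) / p * (C ^ p * h0 0 ^ p))) := by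
    refine (hIlim.mul ((hJlim.rpow_const (Or.inr hp0.le)).const_mul (C ^ p))).congr' ?_
    filter_upwards [hmem, hJlim.eventually (lt_mem_nhds (h0pos 0 ⟨le_rfl, zero_le_one⟩))]
      with y hy hJ
    have hu : 0 < ginv y := lsvInv_pos (by linarith) hinv hmaps hy
    simp only [funext hρ] at hJ ⊢
    set J := ∫ x in ginv y..y, h0 x * x / (x - ginv x)
    have hsplit : J ^ p = (J / ginv y) ^ p * ginv y ^ p := by
      rw [← mul_rpow hJ.le hu.le, div_mul_cancel₀ _ hu.ne']
    rw [hγ _ ((div_pos_iff_of_pos_right hu).1 hJ), hαp, hsplit]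
    ring
  rw [hαp, ← hittingTime_scaling_constant hp hα (h0pos 0 ⟨le_rfl, zero_le_one⟩)]
  exact hlim.comp (tendsto_nhdsWithin_iff.2 ⟨hη, Eventually.of_forall fun n => (hη_mem n).1⟩)
end
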